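/- Suppose c satisfies (Reg), (Twist), and (QC), and X is compact, connected, with Lipschitz boundary, and c-convex with respect to Y. Then there exists a constant C > 0 depending only on n, ℒ(X), ℋ^{n−1}(∂X), C_∇, and the (n/(n−1),1)-Poincaré–Wirtinger constant of normalized Lebesgue measure on X, such that for all ψ₁, ψ₂ ∈ ℝᴺ with ⟨ψ₁ − ψ₂, 𝟙⟩ = 0, all cells Lag_i(ψ₁), Lag_i(ψ₂) nonempty, and max(min_i ℒ(Lag_i(ψ₁)), min_i ℒ(Lag_i(ψ₂))) > 0: sup_{x∈X} |ψ₁^{c*}(x) − ψ₂^{c*}(x)| ≤ C N⁴ √(Σ_{i=1}^N d_H(Lag_i(ψ₁), Lag_i(ψ₂))²) / (max(min_i ℒ(Lag_i(ψ₁)), min_i ℒ(Lag_i(ψ₂))))^{1−1/n}. -/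

import Mathlib

open MeasureTheory Metric Set Filter Bornology
open scoped RealInnerProductSpace ENNReal NNReal Topology symmDiff

noncomputable section

/-- Euclidean `n`-space. -/
abbrev Euc (n : ℕ) : Type := EuclideanSpace ℝ (Fin n)

/-- The `c^*`-transform `ψ^{c^*}(x) = max_i (-c(x,y_i) - ψ^i)` of a dual vector `ψ`. -/
def cStar {n N : ℕ} (c : Euc n → Fin N → ℝ) (ψ : Fin N → ℝ) (x : Euc n) : ℝ :=
  ⨆ i, (-(c x i) - ψ i)

/-- The `i`-th Laguerre cell associated to the dual vector `ψ`. -/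
def Lag {n N : ℕ} (X : Set (Euc n)) (c : Euc n → Fin N → ℝ) (ψ : Fin N → ℝ) (i : Fin N) :
    Set (Euc n) :=
  {x ∈ X | -(c x i) - ψ i = cStar c ψ x}

/-- The map `G(ψ)^i = μ(Lag_i(ψ))`. -/
def Gmap {n N : ℕ} (μ : Measure (Euc n)) (X : Set (Euc n)) (c : Euc n → Fin N → ℝ)
    (ψ : Fin N → ℝ) (i : Fin N) : ℝ :=
  (μ (Lag X c ψ i)).toReal

/-- Condition (Reg): each `c(·, y_i)` is `C²`. -/
def Reg {n N : ℕ} (c : Euc n → Fin N → ℝ) : Prop :=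
  ∀ i, ContDiff ℝ 2 fun x => c x i

/-- Condition (Twist): the gradients `∇_x c(x, y_i)` are pairwise distinct on `X`. -/
def Twist {n N : ℕ} (X : Set (Euc n)) (c : Euc n → Fin N → ℝ) : Prop :=
  ∀ x ∈ X, ∀ i j : Fin N, i ≠ j →
    gradient (fun z => c z i) x ≠ gradient (fun z => c z j) x

/-- `X` has Lipschitz boundary: near every boundary point, `X` coincides with the epigraph
of a Lipschitz function over some hyperplane. -/
def HasLipschitzBoundary {n : ℕ} (X : Set (Euc n)) : Prop :=
  ∀ x ∈ frontier X, ∃ (v : Euc n) (g : Euc n → ℝ) (K : NNReal) (r : ℝ),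
    0 < r ∧ ‖v‖ = 1 ∧ LipschitzWith K g ∧
    ∀ z ∈ ball x r, (z ∈ X ↔ g (z - ⟪z, v⟫ • v) ≤ ⟪z, v⟫)

/-- The `(q,1)`-Poincaré–Wirtinger inequality with constant `CPW`. -/
def PWIneq {n : ℕ} (μ : Measure (Euc n)) (q CPW : ℝ) : Prop :=
  ∀ f : Euc n → ℝ, ContDiff ℝ 1 f →
    (∫ x, |f x - ∫ z, f z ∂μ| ^ q ∂μ) ^ (1 / q) ≤ CPW * ∫ x, ‖gradient f x‖ ∂μ

/-- Loeper's condition (QC): for each `i`, a convex set `X_i` together with a `C²`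
diffeomorphism `exp_i^c : X_i → X` such that all sublevel sets
`{p ∈ X_i : -c(exp_i^c p, y_k) + c(exp_i^c p, y_i) ≤ t}` are convex. -/
structure LoeperSystem {n N : ℕ} (X : Set (Euc n)) (c : Euc n → Fin N → ℝ) where
  dom : Fin N → Set (Euc n)
  exp : Fin N → Euc n → Euc n
  expInv : Fin N → Euc n → Euc n
  convex_dom : ∀ i, Convex ℝ (dom i)
  contDiffOn_exp : ∀ i, ContDiffOn ℝ 2 (exp i) (dom i)
  contDiffOn_expInv : ∀ i, ContDiffOn ℝ 2 (expInv i) X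
  mapsTo_exp : ∀ i, MapsTo (exp i) (dom i) X
  mapsTo_expInv : ∀ i, MapsTo (expInv i) X (dom i)
  left_inv : ∀ i, ∀ p ∈ dom i, expInv i (exp i p) = p
  right_inv : ∀ i, ∀ z ∈ X, exp i (expInv i z) = z
  sublevel_convex : ∀ i k : Fin N, ∀ t : ℝ,
    Convex ℝ {p ∈ dom i | -(c (exp i p) k) + c (exp i p) i ≤ t}

/-- `(T, λ)` minimizes the semi-discrete optimal transport problem with storage fee
given by the convex indicator function of the set `S`. -/
def IsOptimalPair {n N : ℕ} (μ : Measure (Euc n)) (c : Euc n → Fin N → ℝ)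
    (T : Euc n → Fin N) (lam : Fin N → ℝ) (S : Set (Fin N → ℝ)) : Prop :=
  Measurable T ∧ (∀ i, μ (T ⁻¹' {i}) = ENNReal.ofReal (lam i)) ∧ lam ∈ S ∧
    ∀ (T' : Euc n → Fin N) (lam' : Fin N → ℝ), Measurable T' →
      (∀ i, μ (T' ⁻¹' {i}) = ENNReal.ofReal (lam' i)) → lam' ∈ S →
      ∫ x, c x (T x) ∂μ ≤ ∫ x, c x (T' x) ∂μ

/-- The support of a measure. -/
def msupport {n : ℕ} (μ : Measure (Euc n)) : Set (Euc n) :=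
  {x | ∀ U ∈ nhds x, 0 < μ U}

/-- The pseudo `c`-transform `φ^{c†}` of a function `φ`. -/
def cDagger {n N : ℕ} (μ : Measure (Euc n)) (c : Euc n → Fin N → ℝ) (φ : Euc n → ℝ) :
    Fin N → ℝ :=
  fun i => sSup ((fun x => -(c x i) - φ x) '' msupport μ)

/-!
Lipschitz boundary, compactness and connectedness make `X` quasiconvex: two points `a, b` of `X`
are joined inside `X` by a path of length `≤ Λ |a - b|`, so every difference
`c(·, y_i) - c(·, y_k)` is `2 Λ C_∇`-Lipschitz on `X`. If the cells `Lag_i(ψ₁)` and `Lag_k(ψ₁)`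
meet at `w`, comparing `w` with a point of `Lag_k(ψ₂)` at distance `≤ d_H(Lag_k(ψ₁), Lag_k(ψ₂))`
shows that `ψ₂ - ψ₁` jumps by at most `2 Λ C_∇ d_H` from `i` to `k`. The cells of `ψ₁` are closed
and cover the connected set `X`, so their intersection graph is connected, and walking along a
path gives `osc (ψ₂ - ψ₁) ≤ 2 Λ C_∇ (N - 1) max_i d_H`. As `Σ (ψ₁ - ψ₂) = 0`, this oscillation
bounds `|ψ₁^{c*} - ψ₂^{c*}|`. The minimal cell volume is at most `ℒ(X)`, so the denominator is
absorbed into `C`.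
-/

section IntrinsicDist

variable {E : Type*} [NormedAddCommGroup E] [NormedSpace ℝ E] {X : Set E} {a b z : E}
  {ℓ ℓ' : ℝ}

/-- A dual form of "the intrinsic (path) distance from `a` to `b` in `X` is at most `ℓ`". -/
def IntrinsicDistLE (X : Set E) (a b : E) (ℓ : ℝ) : Prop :=
  ∀ (f : E → ℝ) (M : ℝ), 0 ≤ M → Differentiable ℝ f → (∀ x ∈ X, ‖fderiv ℝ f x‖ ≤ M) →
    |f b - f a| ≤ M * ℓ

namespace IntrinsicDistLE

theorem nonneg (h : IntrinsicDistLE X a b ℓ) : 0 ≤ ℓ := by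
  simpa using h (fun _ => 0) 1 zero_le_one (differentiable_const 0) fun _ _ => by simp

theorem mono (h : IntrinsicDistLE X a b ℓ) (hle : ℓ ≤ ℓ') : IntrinsicDistLE X a b ℓ' :=
  fun f M hM hf hX => (h f M hM hf hX).trans (mul_le_mul_of_nonneg_left hle hM)

theorem symm (h : IntrinsicDistLE X a b ℓ) : IntrinsicDistLE X b a ℓ :=
  fun f M hM hf hX => by rw [abs_sub_comm]; exact h f M hM hf hX

theorem trans (h₁ : IntrinsicDistLE X a b ℓ) (h₂ : IntrinsicDistLE X b z ℓ') :
    IntrinsicDistLE X a z (ℓ + ℓ') := fun f M hM hf hX =>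
  calc |f z - f a| ≤ |f z - f b| + |f b - f a| := abs_sub_le _ _ _
    _ ≤ M * ℓ' + M * ℓ := add_le_add (h₂ f M hM hf hX) (h₁ f M hM hf hX)
    _ = M * (ℓ + ℓ') := by ring

theorem of_segment_subset (h : segment ℝ a b ⊆ X) : IntrinsicDistLE X a b (dist a b) := by
  intro f M _ hf hX
  have := (convex_segment a b).norm_image_sub_le_of_norm_fderiv_le (fun x _ => hf x)
    (fun x hx => hX x (h hx)) (left_mem_segment ℝ a b) (right_mem_segment ℝ a b)
  rwa [Real.norm_eq_abs, ← dist_eq_norm, dist_comm] at this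

end IntrinsicDistLE

/-- Quasiconvexity of a set in the sense of metric geometry, not Mathlib's `QuasiconvexOn`. -/
def IsQuasiconvexOn (X S : Set E) (Λ : ℝ≥0) : Prop :=
  ∀ a ∈ X ∩ S, ∀ b ∈ X ∩ S, IntrinsicDistLE X a b (Λ * dist a b)

theorem IsQuasiconvexOn.lipschitzOnWith {Λ M : ℝ≥0} (hX : IsQuasiconvexOn X univ Λ)
    {f : E → ℝ} (hf : Differentiable ℝ f) (hM : ∀ x ∈ X, ‖fderiv ℝ f x‖ ≤ M) :
    LipschitzOnWith (M * Λ) f X :=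
  LipschitzOnWith.of_dist_le_mul fun a ha b hb => by
    rw [Real.dist_eq, NNReal.coe_mul, mul_assoc, dist_comm a b]
    exact hX b ⟨hb, trivial⟩ a ⟨ha, trivial⟩ f M M.2 hf hM

def IsLocallyQuasiconvex (X : Set E) : Prop :=
  ∀ x ∈ X, ∃ ρ > 0, ∃ Λ, IsQuasiconvexOn X (ball x ρ) Λ

theorem IsLocallyQuasiconvex.exists_intrinsicDistLE (hloc : IsLocallyQuasiconvex X)
    (hXc : IsPreconnected X) (ha : a ∈ X) (hb : b ∈ X) : ∃ ℓ, IntrinsicDistLE X a b ℓ := by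
  refine hXc.induction₂' (fun a b => ∃ ℓ, IntrinsicDistLE X a b ℓ) (fun x hx => ?_)
    (fun _ _ _ _ _ _ ⟨_, h₁⟩ ⟨_, h₂⟩ => ⟨_, h₁.trans h₂⟩) ha hb
  obtain ⟨ρ, hρ, Λ, hΛ⟩ := hloc x hx
  filter_upwards [inter_mem_nhdsWithin X (ball_mem_nhds x hρ)] with y hy
  have h := hΛ x ⟨hx, mem_ball_self hρ⟩ y hy
  exact ⟨⟨_, h⟩, ⟨_, h.symm⟩⟩

theorem IsLocallyQuasiconvex.exists_intrinsicDistLE_near (hloc : IsLocallyQuasiconvex X)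
    (hXc : IsPreconnected X) (ha : a ∈ X) (hb : b ∈ X) :
    ∃ ρ > 0, ∃ Λ : ℝ≥0, ∀ a' ∈ X ∩ ball a ρ, ∀ b' ∈ X ∩ ball b ρ,
      IntrinsicDistLE X a' b' (Λ * dist a' b') := by
  obtain ⟨ρa, hρa, Λa, hΛa⟩ := hloc a ha
  rcases eq_or_ne a b with rfl | hab
  · exact ⟨ρa, hρa, Λa, hΛa⟩
  obtain ⟨ρb, hρb, Λb, hΛb⟩ := hloc b hb
  obtain ⟨ℓ, hℓ⟩ := hloc.exists_intrinsicDistLE hXc ha hb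
  have hD : 0 < dist a b := dist_pos.2 hab
  set ρ := min (min ρa ρb) (dist a b / 4)
  have hρ : 0 < ρ := by positivity
  set K := Λa * ρ + ℓ + Λb * ρ
  have hK : 0 ≤ K := by have := hℓ.nonneg; positivity
  refine ⟨ρ, hρ, (2 * K / dist a b).toNNReal, ?_⟩
  rintro a' ⟨ha'X, ha'⟩ b' ⟨hb'X, hb'⟩
  rw [mem_ball] at ha' hb'
  have hρa' : ρ ≤ ρa := (min_le_left _ _).trans (min_le_left _ _)
  have hρb' : ρ ≤ ρb := (min_le_left _ _).trans (min_le_right _ _)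
  have hρD : ρ ≤ dist a b / 4 := min_le_right _ _
  have h₁ := hΛa a' ⟨ha'X, mem_ball.2 (ha'.trans_le hρa')⟩ a ⟨ha, mem_ball_self hρa⟩
  have h₃ := hΛb b ⟨hb, mem_ball_self hρb⟩ b' ⟨hb'X, mem_ball.2 (hb'.trans_le hρb')⟩
  refine ((h₁.trans hℓ).trans h₃).mono ?_
  have hfar : dist a b / 2 ≤ dist a' b' := by
    linarith [dist_triangle4 a a' b' b, dist_comm a a', dist_comm b' b]
  rw [Real.coe_toNNReal _ (by positivity), dist_comm b b']
  calc Λa * dist a' a + ℓ + Λb * dist b' b ≤ K := by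
        have := ha'.le; have := hb'.le; simp only [K]; gcongr
    _ = 2 * K / dist a b * (dist a b / 2) := by field_simp
    _ ≤ 2 * K / dist a b * dist a' b' := by gcongr

theorem IsLocallyQuasiconvex.exists_isQuasiconvexOn (hloc : IsLocallyQuasiconvex X)
    (hX : IsCompact X) (hXc : IsPreconnected X) :
    ∃ Λ, IsQuasiconvexOn X univ Λ := by
  let p : Set (E × E) → Prop := fun T => ∃ Λ : ℝ≥0, ∀ q ∈ T, q.1 ∈ X → q.2 ∈ X →
    IntrinsicDistLE X q.1 q.2 (Λ * dist q.1 q.2)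
  suffices hp : p (X ×ˢ X) by
    obtain ⟨Λ, hΛ⟩ := hp
    exact ⟨Λ, fun a ha b hb => hΛ (a, b) ⟨ha.1, hb.1⟩ ha.1 hb.1⟩
  refine (hX.prod hX).induction_on ⟨0, by simp⟩
    (fun T T' hTT' ⟨Λ, hΛ⟩ => ⟨Λ, fun q hq => hΛ q (hTT' hq)⟩)
    (fun T T' ⟨Λ, hΛ⟩ ⟨Λ', hΛ'⟩ => ⟨max Λ Λ', ?_⟩) ?_
  · have hle : ∀ Λ₀ ≤ max Λ Λ', ∀ q : E × E,
        (Λ₀ : ℝ) * dist q.1 q.2 ≤ (max Λ Λ' : ℝ≥0) * dist q.1 q.2 :=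
      fun _ h q => mul_le_mul_of_nonneg_right (by exact_mod_cast h) dist_nonneg
    rintro q (hq | hq) h₁ h₂
    · exact (hΛ q hq h₁ h₂).mono (hle Λ (le_max_left _ _) q)
    · exact (hΛ' q hq h₁ h₂).mono (hle Λ' (le_max_right _ _) q)
  · rintro ⟨a, b⟩ ⟨ha, hb⟩
    obtain ⟨ρ, hρ, Λ, hΛ⟩ := hloc.exists_intrinsicDistLE_near hXc ha hb
    exact ⟨ball a ρ ×ˢ ball b ρ, mem_nhdsWithin_of_mem_nhds
      (prod_mem_nhds (ball_mem_nhds a hρ) (ball_mem_nhds b hρ)),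
      Λ, fun q hq h₁ h₂ => hΛ q.1 ⟨h₁, hq.1⟩ q.2 ⟨h₂, hq.2⟩⟩

end IntrinsicDist

section LipschitzChart

variable {F : Type*} [NormedAddCommGroup F] [InnerProductSpace ℝ F] {X : Set F} {v x : F}
  {g : F → ℝ} {K : ℝ≥0} {r : ℝ}

theorem segment_add_smul_subset_of_chart (hv : ‖v‖ = 1)
    (hchart : ∀ z ∈ ball x r, (z ∈ X ↔ g (z - ⟪z, v⟫ • v) ≤ ⟪z, v⟫)) {z : F} {s : ℝ}
    (hz : z ∈ X ∩ ball x r) (hs : 0 ≤ s) (hzs : z + s • v ∈ ball x r) :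
    segment ℝ z (z + s • v) ⊆ X := by
  have hvv : ⟪v, v⟫ = 1 := by rw [real_inner_self_eq_norm_sq, hv, one_pow]
  intro y hy
  have hyr := (convex_ball x r).segment_subset hz.2 hzs hy
  rw [segment_eq_image'] at hy
  obtain ⟨θ, ⟨hθ0, -⟩, rfl⟩ := hy
  dsimp only at hyr ⊢
  rw [add_sub_cancel_left, smul_smul] at hyr ⊢
  refine (hchart _ hyr).2 ?_
  have hproj : z + (θ * s) • v - ⟪z + (θ * s) • v, v⟫ • v = z - ⟪z, v⟫ • v := by
    rw [inner_add_left, real_inner_smul_left, hvv]; module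
  rw [hproj, inner_add_left, real_inner_smul_left, hvv]
  linarith [(hchart z hz.2).1 hz.1, mul_nonneg hθ0 hs]

theorem segment_subset_of_chart_of_inner_eq (hg : LipschitzWith K g)
    (hchart : ∀ z ∈ ball x r, (z ∈ X ↔ g (z - ⟪z, v⟫ • v) ≤ ⟪z, v⟫)) {p q : F} {t : ℝ}
    (hp : p ∈ ball x r) (hq : q ∈ ball x r) (hpv : ⟪p, v⟫ = t) (hqv : ⟪q, v⟫ = t)
    (ht : g (p - t • v) + K * ‖q - p‖ ≤ t) : segment ℝ p q ⊆ X := by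
  intro z hz
  refine (hchart z ((convex_ball x r).segment_subset hp hq hz)).2 ?_
  rw [segment_eq_image'] at hz
  obtain ⟨θ, ⟨hθ0, hθ1⟩, rfl⟩ := hz
  have hzv : ⟪p + θ • (q - p), v⟫ = t := by
    rw [inner_add_left, real_inner_smul_left, inner_sub_left, hpv, hqv]; ring
  have hdist : dist (p + θ • (q - p) - t • v) (p - t • v) ≤ ‖q - p‖ := by
    rw [dist_eq_norm, show p + θ • (q - p) - t • v - (p - t • v) = θ • (q - p) by abel,
      norm_smul, Real.norm_of_nonneg hθ0]
    exact mul_le_of_le_one_left (norm_nonneg _) hθ1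
  rw [hzv]
  calc g (p + θ • (q - p) - t • v)
      ≤ g (p - t • v) + K * dist (p + θ • (q - p) - t • v) (p - t • v) := hg.le_add_mul _ _
    _ ≤ g (p - t • v) + K * ‖q - p‖ := by gcongr
    _ ≤ t := ht

theorem add_smul_mem_ball (hv : ‖v‖ = 1) {z : F} {ρ s : ℝ} (hz : z ∈ ball x ρ) (hs : 0 ≤ s)
    (hr : ρ + s ≤ r) : z + s • v ∈ ball x r := by
  rw [mem_ball] at hz ⊢
  calc dist (z + s • v) x ≤ dist (z + s • v) z + dist z x := dist_triangle _ _ _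
    _ < s + ρ := by
      rw [dist_self_add_left, norm_smul, hv, Real.norm_of_nonneg hs, mul_one]; linarith
    _ ≤ r := by linarith

theorem intrinsicDistLE_add_smul_of_chart (hv : ‖v‖ = 1)
    (hchart : ∀ z ∈ ball x r, (z ∈ X ↔ g (z - ⟪z, v⟫ • v) ≤ ⟪z, v⟫)) {z : F} {ρ s : ℝ}
    (hz : z ∈ X ∩ ball x ρ) (hs : 0 ≤ s) (hρs : ρ + s ≤ r) :
    IntrinsicDistLE X z (z + s • v) s := by
  have hzr : z ∈ ball x r := ball_subset_ball (by linarith) hz.2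
  have := IntrinsicDistLE.of_segment_subset (segment_add_smul_subset_of_chart hv hchart
    ⟨hz.1, hzr⟩ hs (add_smul_mem_ball hv hz.2 hs hρs))
  rwa [dist_self_add_right, norm_smul, hv, Real.norm_of_nonneg hs, mul_one] at this

/-- From `a` and `b`, go straight up to the common height `t = ⟪a, v⟫ + (1 + 2K) |a - b|`
and join the two lifted points horizontally. -/
theorem exists_isQuasiconvexOn_ball_of_chart (hv : ‖v‖ = 1) (hg : LipschitzWith K g)
    (hr : 0 < r) (hchart : ∀ z ∈ ball x r, (z ∈ X ↔ g (z - ⟪z, v⟫ • v) ≤ ⟪z, v⟫)) :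
    ∃ ρ > 0, ∃ Λ, IsQuasiconvexOn X (ball x ρ) Λ := by
  set ρ := r / (5 * (K + 1))
  have hρ : 0 < ρ := by positivity
  have hρr : (5 * (K + 1)) * ρ = r := by simp only [ρ]; field_simp
  refine ⟨ρ, hρ, 5 * (K + 1), ?_⟩
  rintro a ⟨haX, ha⟩ b ⟨hbX, hb⟩
  have hvv : ⟪v, v⟫ = 1 := by rw [real_inner_self_eq_norm_sq, hv, one_pow]
  set d := dist a b
  set ta := ⟪a, v⟫
  set tb := ⟪b, v⟫
  set t := ta + (1 + 2 * K) * d with ht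
  have hd₀ : 0 ≤ d := dist_nonneg
  have hKd : 0 ≤ (K : ℝ) * d := by positivity
  have hab : |ta - tb| ≤ d := by
    have := abs_real_inner_le_norm (a - b) v
    rwa [hv, mul_one, ← dist_eq_norm, inner_sub_left] at this
  obtain ⟨hab₁, hab₂⟩ := abs_le.1 hab
  have hlen : ρ + (2 + 2 * K) * d ≤ r := by
    have : d < 2 * ρ := by linarith [dist_triangle_right a b x, mem_ball.1 ha, mem_ball.1 hb]
    nlinarith [mul_le_mul_of_nonneg_left this.le (by positivity : (0 : ℝ) ≤ 2 + 2 * K)]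
  have hsa : 0 ≤ t - ta := by linarith
  have hsb : 0 ≤ t - tb := by linarith
  have h₁ := intrinsicDistLE_add_smul_of_chart hv hchart ⟨haX, ha⟩ hsa (by linarith)
  have h₃ := intrinsicDistLE_add_smul_of_chart hv hchart ⟨hbX, hb⟩ hsb (by linarith)
  set a' := a + (t - ta) • v
  set b' := b + (t - tb) • v
  have hb'a' : ‖b' - a'‖ ≤ 2 * d := by
    calc ‖b' - a'‖ = ‖(b - a) + (ta - tb) • v‖ := by congr 1; simp only [a', b']; module
      _ ≤ d + |ta - tb| := (norm_add_le _ _).trans_eq (by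
        rw [norm_smul, hv, mul_one, Real.norm_eq_abs, ← dist_eq_norm, dist_comm])
      _ ≤ 2 * d := by linarith
  have h₂ : IntrinsicDistLE X a' b' (dist a' b') := by
    have hheight : ∀ z : F, ⟪z + (t - ⟪z, v⟫) • v, v⟫ = t := fun z => by
      rw [inner_add_left, real_inner_smul_left, hvv]; ring
    refine IntrinsicDistLE.of_segment_subset (segment_subset_of_chart_of_inner_eq hg hchart
      (add_smul_mem_ball hv ha hsa (by linarith))
      (add_smul_mem_ball hv hb hsb (by linarith)) (hheight a) (hheight b) ?_)
    have hproj : a' - t • v = a - ta • v := by simp only [a']; module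
    have hga : g (a - ta • v) ≤ ta := (hchart a (ball_subset_ball (by nlinarith) ha)).1 haX
    rw [hproj]
    linarith [mul_le_mul_of_nonneg_left hb'a' K.coe_nonneg]
  refine ((h₁.trans h₂).trans h₃.symm).mono ?_
  rw [dist_eq_norm, ← norm_neg, neg_sub]
  push_cast
  nlinarith

end LipschitzChart

theorem HasLipschitzBoundary.isLocallyQuasiconvex {n : ℕ} {X : Set (Euc n)}
    (hX : HasLipschitzBoundary X) : IsLocallyQuasiconvex X := by
  intro x hx
  by_cases hint : x ∈ interior X
  · obtain ⟨ρ, hρ, hball⟩ := Metric.mem_nhds_iff.1 (mem_interior_iff_mem_nhds.1 hint)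
    refine ⟨ρ, hρ, 1, fun a ha b hb => ?_⟩
    simpa using IntrinsicDistLE.of_segment_subset
      (((convex_ball x ρ).segment_subset ha.2 hb.2).trans hball)
  · obtain ⟨v, g, K, r, hr, hv, hg, hchart⟩ := hX x ⟨subset_closure hx, hint⟩
    exact exists_isQuasiconvexOn_ball_of_chart hv hg hr hchart

theorem exists_dist_le_hausdorffDist {α : Type*} [PseudoMetricSpace α] {s t : Set α} {x : α}
    (hx : x ∈ s) (hs : IsBounded s) (ht : IsCompact t) (hne : t.Nonempty) :
    ∃ y ∈ t, dist x y ≤ hausdorffDist s t := by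
  obtain ⟨y, hy, hxy⟩ := ht.exists_infDist_eq_dist hne x
  exact ⟨y, hy, hxy ▸ infDist_le_hausdorffDist_of_mem hx
    (hausdorffEDist_ne_top_of_nonempty_of_bounded ⟨x, hx⟩ hne hs ht.isBounded)⟩

theorem rpow_one_sub_inv_le {m M : ℝ} (n : ℕ) (hm : 0 ≤ m) (hmM : m ≤ M) (hM : 1 ≤ M) :
    m ^ (1 - 1 / (n : ℝ)) ≤ M := by
  have hexp : 0 ≤ 1 - 1 / (n : ℝ) := by
    rw [one_div, sub_nonneg]; exact Nat.cast_inv_le_one n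
  exact (Real.rpow_le_rpow hm hmM hexp).trans
    (Real.rpow_le_self_of_one_le hM (sub_le_self _ (by positivity)))

theorem le_sqrt_sum_sq {ι : Type*} [Fintype ι] (f : ι → ℝ) (i : ι) : f i ≤ √(∑ j, f j ^ 2) :=
  Real.le_sqrt_of_sq_le (Finset.single_le_sum (fun j _ => sq_nonneg (f j)) (Finset.mem_univ i))

section Graph

variable {V : Type*} {G : SimpleGraph V} {f : V → ℝ} {δ : ℝ}

theorem SimpleGraph.reachable_of_forall_exists_adj {u v : V}
    (h : ∀ P : Set V, u ∈ P → v ∉ P → ∃ a ∈ P, ∃ b ∉ P, G.Adj a b) : G.Reachable u v := by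
  by_contra huv
  obtain ⟨a, ha, b, hb, hab⟩ := h {w | G.Reachable u w} (SimpleGraph.Reachable.refl u) huv
  exact hb (SimpleGraph.Reachable.trans ha hab.reachable)

theorem SimpleGraph.Walk.sub_le_length_mul (h : ∀ a b, G.Adj a b → f b - f a ≤ δ) {u v : V}
    (p : G.Walk u v) : f v - f u ≤ p.length * δ := by
  induction p with
  | nil => simp
  | cons hadj p ih => rw [length_cons]; push_cast; linarith [h _ _ hadj]

theorem SimpleGraph.Preconnected.sub_le_mul [Fintype V] (hG : G.Preconnected) (hδ : 0 ≤ δ)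
    (h : ∀ a b, G.Adj a b → f b - f a ≤ δ) (u v : V) :
    f v - f u ≤ (Fintype.card V - 1) * δ := by
  classical
  obtain ⟨p⟩ := hG u v
  have hlen : (p.bypass.length : ℝ) + 1 ≤ Fintype.card V := by
    exact_mod_cast p.bypass_isPath.length_lt
  calc f v - f u ≤ p.bypass.length * δ := p.bypass.sub_le_length_mul h
    _ ≤ (Fintype.card V - 1) * δ := by gcongr; linarith

def intersectionGraph {ι α : Type*} (A : ι → Set α) : SimpleGraph ι :=
  SimpleGraph.fromRel fun i k => (A i ∩ A k).Nonempty

theorem IsPreconnected.intersectionGraph_preconnected {ι α : Type*} [TopologicalSpace α]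
    [Finite ι] {X : Set α} {A : ι → Set α} (hX : IsPreconnected X) (hA : ∀ i, IsClosed (A i))
    (hAX : ∀ i, A i ⊆ X) (hcover : X ⊆ ⋃ i, A i) (hne : ∀ i, (A i).Nonempty) :
    (intersectionGraph A).Preconnected := by
  intro u v
  refine SimpleGraph.reachable_of_forall_exists_adj fun P hu hv => ?_
  suffices ∃ a ∈ P, ∃ b ∉ P, (A a ∩ A b).Nonempty by
    obtain ⟨a, ha, b, hb, hab⟩ := this
    exact ⟨a, ha, b, hb, (SimpleGraph.fromRel_adj _ _ _).2 ⟨ne_of_mem_of_not_mem ha hb, .inl hab⟩⟩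
  set U := ⋃ a ∈ P, A a
  set W := ⋃ b ∈ Pᶜ, A b
  have hcov : X ⊆ U ∪ W := fun y hy => by
    obtain ⟨i, hi⟩ := mem_iUnion.1 (hcover hy)
    by_cases hiP : i ∈ P
    exacts [.inl (mem_biUnion hiP hi), .inr (mem_biUnion hiP hi)]
  by_cases hUW : X ∩ (U ∩ W) = ∅
  · rcases isPreconnected_iff_subset_of_disjoint_closed.1 hX U W
      (P.toFinite.isClosed_biUnion fun i _ => hA i) (Pᶜ.toFinite.isClosed_biUnion fun i _ => hA i)
      hcov hUW with hXU | hXW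
    · obtain ⟨y, hy⟩ := hne v
      obtain ⟨a, ha, hya⟩ := mem_iUnion₂.1 (hXU (hAX v hy))
      exact ⟨a, ha, v, hv, y, hya, hy⟩
    · obtain ⟨y, hy⟩ := hne u
      obtain ⟨b, hb, hyb⟩ := mem_iUnion₂.1 (hXW (hAX u hy))
      exact ⟨u, hu, b, hb, y, hy, hyb⟩
  · obtain ⟨y, -, hyU, hyW⟩ := nonempty_iff_ne_empty.2 hUW
    obtain ⟨a, ha, hya⟩ := mem_iUnion₂.1 hyU
    obtain ⟨b, hb, hyb⟩ := mem_iUnion₂.1 hyW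
    exact ⟨a, ha, b, hb, y, hya, hyb⟩

end Graph

section Laguerre

variable {n N : ℕ} {X : Set (Euc n)} {c : Euc n → Fin N → ℝ} {ψ ψ₁ ψ₂ : Fin N → ℝ}
  {x : Euc n} {i k : Fin N}

theorem le_cStar (c : Euc n → Fin N → ℝ) (ψ : Fin N → ℝ) (x : Euc n) (i : Fin N) :
    -(c x i) - ψ i ≤ cStar c ψ x :=
  le_ciSup (f := fun i => -(c x i) - ψ i) (finite_range _).bddAbove i

theorem mem_Lag_iff : x ∈ Lag X c ψ i ↔ x ∈ X ∧ ∀ k, -(c x k) - ψ k ≤ -(c x i) - ψ i := by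
  have : Nonempty (Fin N) := ⟨i⟩
  exact ⟨fun h => ⟨h.1, fun k => (le_cStar c ψ x k).trans_eq h.2.symm⟩,
    fun h => ⟨h.1, le_antisymm (le_cStar c ψ x i) (ciSup_le h.2)⟩⟩

theorem isClosed_Lag (hX : IsClosed X) (hc : ∀ i, Continuous fun x => c x i) :
    IsClosed (Lag X c ψ i) := by
  have : Lag X c ψ i = X ∩ ⋂ k, {x | -(c x k) - ψ k ≤ -(c x i) - ψ i} := by
    ext; simp [mem_Lag_iff]
  rw [this]
  exact hX.inter (isClosed_iInter fun k =>
    isClosed_le ((hc k).neg.sub continuous_const) ((hc i).neg.sub continuous_const))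

theorem exists_mem_Lag [Nonempty (Fin N)] (hx : x ∈ X) : ∃ i, x ∈ Lag X c ψ i :=
  let ⟨i, hi⟩ := exists_eq_ciSup_of_finite (f := fun i => -(c x i) - ψ i)
  ⟨i, hx, hi⟩

theorem sub_le_of_mem_Lag {L : ℝ≥0} (hlip : LipschitzOnWith L (fun z => c z i - c z k) X)
    {w z : Euc n} (hw : w ∈ Lag X c ψ₁ i) (hz : z ∈ Lag X c ψ₂ k) :
    (ψ₂ k - ψ₁ k) - (ψ₂ i - ψ₁ i) ≤ L * dist z w := by
  have hw' := (mem_Lag_iff.1 hw).2 k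
  have hz' := (mem_Lag_iff.1 hz).2 i
  have hzw := hlip.dist_le_mul z hz.1 w hw.1
  rw [Real.dist_eq] at hzw
  linarith [le_abs_self ((c z i - c z k) - (c w i - c w k))]

theorem cStar_le_cStar_add [Nonempty (Fin N)] {B : ℝ} (h : ∀ i, ψ₂ i ≤ ψ₁ i + B) :
    cStar c ψ₁ x ≤ cStar c ψ₂ x + B :=
  ciSup_le fun i => by linarith [le_cStar c ψ₂ x i, h i]

theorem abs_cStar_sub_cStar_le [Nonempty (Fin N)] (hsum : ∑ j, (ψ₁ j - ψ₂ j) = 0) {B : ℝ}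
    (h : ∀ i k, (ψ₂ k - ψ₁ k) - (ψ₂ i - ψ₁ i) ≤ B) :
    |cStar c ψ₁ x - cStar c ψ₂ x| ≤ B := by
  have hsum' : ∑ j, (ψ₂ j - ψ₁ j) = ∑ _j : Fin N, (0 : ℝ) := by
    rw [Finset.sum_const_zero, ← neg_eq_zero, ← Finset.sum_neg_distrib]; simpa using hsum
  obtain ⟨i₀, -, hi₀⟩ := Finset.exists_le_of_sum_le Finset.univ_nonempty hsum'.le
  obtain ⟨i₁, -, hi₁⟩ := Finset.exists_le_of_sum_le Finset.univ_nonempty hsum'.ge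
  rw [abs_sub_le_iff]
  constructor
  · linarith [cStar_le_cStar_add (c := c) (x := x) (ψ₁ := ψ₁) (ψ₂ := ψ₂) (B := B)
      fun k => by linarith [h i₀ k]]
  · linarith [cStar_le_cStar_add (c := c) (x := x) (ψ₁ := ψ₂) (ψ₂ := ψ₁) (B := B)
      fun k => by linarith [h k i₁]]

theorem abs_cStar_sub_cStar_le_of_hausdorffDist_le [Nonempty (Fin N)] (hX : IsCompact X)
    (hXc : IsPreconnected X) (hc : ∀ i, Continuous fun x => c x i) {L : ℝ≥0}
    (hlip : ∀ i k, LipschitzOnWith L (fun z => c z i - c z k) X)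
    (hsum : ∑ j, (ψ₁ j - ψ₂ j) = 0)
    (hne : ∀ i, (Lag X c ψ₁ i).Nonempty ∧ (Lag X c ψ₂ i).Nonempty) {s : ℝ}
    (hs : ∀ i, hausdorffDist (Lag X c ψ₁ i) (Lag X c ψ₂ i) ≤ s) (x : Euc n) :
    |cStar c ψ₁ x - cStar c ψ₂ x| ≤ (N - 1) * (L * s) := by
  have hLag : ∀ ψ i, IsCompact (Lag X c ψ i) := fun ψ i =>
    hX.of_isClosed_subset (isClosed_Lag hX.isClosed hc) fun _ h => h.1
  have hjump : ∀ i k, (intersectionGraph (Lag X c ψ₁)).Adj i k →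
      (ψ₂ k - ψ₁ k) - (ψ₂ i - ψ₁ i) ≤ L * s := by
    intro i k hik
    obtain ⟨w, hwi, hwk⟩ : (Lag X c ψ₁ i ∩ Lag X c ψ₁ k).Nonempty := by
      rcases ((SimpleGraph.fromRel_adj _ _ _).1 hik).2 with h | h
      exacts [h, inter_comm (Lag X c ψ₁ k) _ ▸ h]
    obtain ⟨z, hz, hwz⟩ :=
      exists_dist_le_hausdorffDist hwk (hLag ψ₁ k).isBounded (hLag ψ₂ k) (hne k).2
    calc _ ≤ L * dist z w := sub_le_of_mem_Lag (hlip i k) hwi hz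
      _ ≤ L * s := by gcongr; rw [dist_comm]; exact hwz.trans (hs k)
  have hconn := hXc.intersectionGraph_preconnected (fun i => isClosed_Lag hX.isClosed hc)
    (fun i _ h => h.1) (fun _ hx => mem_iUnion.2 (exists_mem_Lag hx)) (fun i => (hne i).1)
  have hs₀ : 0 ≤ s := hausdorffDist_nonneg.trans (hs (Classical.arbitrary _))
  refine abs_cStar_sub_cStar_le hsum fun i k => ?_
  simpa using hconn.sub_le_mul (f := fun j => ψ₂ j - ψ₁ j) (by positivity) hjump i k

theorem lipschitzOnWith_cost_sub {Λ : ℝ≥0} (hΛ : IsQuasiconvexOn X univ Λ) (hreg : Reg c)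
    {Cgrad : ℝ} (hgrad : ∀ x ∈ X, ∀ i, ‖gradient (fun z => c z i) x‖ ≤ Cgrad) (i k : Fin N) :
    LipschitzOnWith (2 * Cgrad.toNNReal * Λ) (fun z => c z i - c z k) X := by
  have hdiff : ∀ i, Differentiable ℝ fun z => c z i := fun i =>
    (hreg i).differentiable two_ne_zero
  have hfderiv : ∀ i, ∀ z ∈ X, ‖fderiv ℝ (fun z => c z i) z‖ ≤ Cgrad.toNNReal := fun i z hz =>
    ((LinearIsometryEquiv.norm_map _ _).symm.trans_le (hgrad z hz i)).trans
      (Real.le_coe_toNNReal _)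
  refine hΛ.lipschitzOnWith ((hdiff i).sub (hdiff k)) fun z hz => ?_
  rw [fderiv_fun_sub (hdiff i z) (hdiff k z)]
  push_cast
  linarith [norm_sub_le (fderiv ℝ (fun z => c z i) z) (fderiv ℝ (fun z => c z k) z),
    hfderiv i z hz, hfderiv k z hz]

theorem iInf_volume_Lag_le [Nonempty (Fin N)] (hX : IsCompact X) (ψ : Fin N → ℝ) :
    (⨅ i, (volume (Lag X c ψ i)).toReal) ≤ (volume X).toReal :=
  (ciInf_le (finite_range _).bddBelow (Classical.arbitrary _)).trans
    (ENNReal.toReal_mono hX.measure_lt_top.ne (measure_mono fun _ h => h.1))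

end Laguerre


theorem stmt4_general {n : ℕ}
    (X : Set (Euc n)) (hXcpt : IsCompact X) (hXconn : IsConnected X)
    (hXlip : HasLipschitzBoundary X)
    (Cgrad : ℝ) :
    ∃ C : ℝ, 0 < C ∧
      ∀ N : ℕ, 0 < N → ∀ c : Euc n → Fin N → ℝ, Reg c → Twist X c →
      (∀ x ∈ X, ∀ i, ‖gradient (fun z => c z i) x‖ ≤ Cgrad) →
      ∀ S : LoeperSystem X c, (∀ i, Convex ℝ (S.expInv i '' X)) →
      ∀ ψ₁ ψ₂ : Fin N → ℝ, (∑ j, (ψ₁ j - ψ₂ j)) = 0 →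
        (∀ i, (Lag X c ψ₁ i).Nonempty ∧ (Lag X c ψ₂ i).Nonempty) →
        0 < max (⨅ i, (volume (Lag X c ψ₁ i)).toReal)
              (⨅ i, (volume (Lag X c ψ₂ i)).toReal) →
        ∀ x ∈ X, |cStar c ψ₁ x - cStar c ψ₂ x| ≤
          C * N ^ 4 *
            Real.sqrt (∑ i, hausdorffDist (Lag X c ψ₁ i) (Lag X c ψ₂ i) ^ 2) /
          (max (⨅ i, (volume (Lag X c ψ₁ i)).toReal)
              (⨅ i, (volume (Lag X c ψ₂ i)).toReal)) ^ (1 - 1 / (n : ℝ)) := by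
  obtain ⟨Λ, hΛ⟩ :=
    hXlip.isLocallyQuasiconvex.exists_isQuasiconvexOn hXcpt hXconn.isPreconnected
  set L : ℝ≥0 := 2 * Cgrad.toNNReal * Λ
  set M := max (volume X).toReal 1
  refine ⟨(L + 1) * M, by positivity, ?_⟩
  intro N hN c hreg _ hgrad _ _ ψ₁ ψ₂ hsum hne hpos x _
  have : Nonempty (Fin N) := ⟨⟨0, hN⟩⟩
  have hbound := abs_cStar_sub_cStar_le_of_hausdorffDist_le hXcpt hXconn.isPreconnected
    (fun i => (hreg i).continuous) (lipschitzOnWith_cost_sub hΛ hreg hgrad) hsum hne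
    (le_sqrt_sum_sq (fun i => hausdorffDist (Lag X c ψ₁ i) (Lag X c ψ₂ i))) x
  have hvol := rpow_one_sub_inv_le n hpos.le ((max_le (iInf_volume_Lag_le hXcpt ψ₁)
    (iInf_volume_Lag_le hXcpt ψ₂)).trans (le_max_left _ 1)) (le_max_right _ _)
  have hN : (1 : ℝ) ≤ N := by exact_mod_cast hN
  have hN4 : (N : ℝ) - 1 ≤ N ^ 4 := by linarith [le_self_pow₀ hN (by norm_num : 4 ≠ 0)]
  set s := √(∑ i, hausdorffDist (Lag X c ψ₁ i) (Lag X c ψ₂ i) ^ 2)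
  rw [le_div_iff₀ (Real.rpow_pos_of_pos hpos _)]
  calc _ ≤ (N - 1) * (L * s) * M :=
        mul_le_mul hbound hvol (by positivity) (mul_nonneg (by linarith) (by positivity))
    _ ≤ N ^ 4 * ((L + 1) * s) * M := by gcongr; linarith
    _ = (L + 1) * M * N ^ 4 * s := by ring

/-- **Theorem 1.5: uniform stability of dual potentials.** -/
theorem stmt4 {n : ℕ} (hn : 2 ≤ n)
    (X : Set (Euc n)) (hXcpt : IsCompact X) (hXconn : IsConnected X)
    (hXlip : HasLipschitzBoundary X)
    (Cgrad CPW : ℝ) (hCPW : 0 < CPW)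
    (hPW : PWIneq ((volume X)⁻¹ • volume.restrict X) ((n : ℝ) / ((n : ℝ) - 1)) CPW) :
    ∃ C : ℝ, 0 < C ∧
      ∀ N : ℕ, 0 < N → ∀ c : Euc n → Fin N → ℝ, Reg c → Twist X c →
      (∀ x ∈ X, ∀ i, ‖gradient (fun z => c z i) x‖ ≤ Cgrad) →
      ∀ S : LoeperSystem X c, (∀ i, Convex ℝ (S.expInv i '' X)) →
      ∀ ψ₁ ψ₂ : Fin N → ℝ, (∑ j, (ψ₁ j - ψ₂ j)) = 0 →
        (∀ i, (Lag X c ψ₁ i).Nonempty ∧ (Lag X c ψ₂ i).Nonempty) →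
        0 < max (⨅ i, (volume (Lag X c ψ₁ i)).toReal)
              (⨅ i, (volume (Lag X c ψ₂ i)).toReal) →
        ∀ x ∈ X, |cStar c ψ₁ x - cStar c ψ₂ x| ≤
          C * N ^ 4 *
            Real.sqrt (∑ i, hausdorffDist (Lag X c ψ₁ i) (Lag X c ψ₂ i) ^ 2) /
          (max (⨅ i, (volume (Lag X c ψ₁ i)).toReal)
              (⨅ i, (volume (Lag X c ψ₂ i)).toReal)) ^ (1 - 1 / (n : ℝ)) :=
  stmt4_general X hXcpt hXconn hXlip Cgrad
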